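/- arXiv:2310.18596 — 4 statements merged into one kernel-verified Lean document; each statement's English description precedes it below -/
import Mathlib

section
/- In the takeover game under cumulative voting, if the resisters distribute total voting power p_r evenly among exactly (n-t+1) candidates (each receiving p_r/(n-t+1)), then the minimum total voting power an attacker needs to place at least t of its own candidates among the top n is t·p_r/(n-t+1) (assuming ties favor the attacker). -/
/-- Cumulative-voting takeover game: the attacker (with disjoint candidate set)
occupies at least `t` of the top-`n` seats (ties favoring the attacker) iff
there are `t` attacker candidates each strictly beaten by at most `n - t`
resister candidates. -/
def wins (n t : ℕ) {Mr Ma : ℕ} (w : Fin Mr → ℝ) (a : Fin Ma → ℝ) : Prop :=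
  ∃ S : Finset (Fin Ma), S.card = t ∧ ∀ i ∈ S,
    (Finset.univ.filter (fun j => a i < w j)).card ≤ n - t

lemma card_filter_val_lt (M k : ℕ) (h : k ≤ M) :
    (Finset.univ.filter (fun i : Fin M => (i : ℕ) < k)).card = k := by
  have : Finset.univ.filter (fun i : Fin M => (i : ℕ) < k) =
      (Finset.range k).attachFin (fun m hm =>
        lt_of_lt_of_le (Finset.mem_range.mp hm) h) := by
    ext i
    simp [Finset.mem_attachFin]
  rw [this, Finset.card_attachFin, Finset.card_range]

theorem stmt0 (n t : ℕ) (ht : 1 ≤ t) (htn : t ≤ n) (pr : ℝ) (hpr : 0 ≤ pr)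
    (Mr Ma : ℕ) (hMa : t ≤ Ma) (hMr : n - t + 1 ≤ Mr)
    (w : Fin Mr → ℝ)
    (hw : ∀ i : Fin Mr,
      w i = if (i : ℕ) < n - t + 1 then pr / ((n - t + 1 : ℕ) : ℝ) else 0) :
    IsLeast {P : ℝ | ∃ a : Fin Ma → ℝ,
        (∀ i, 0 ≤ a i) ∧ (∑ i, a i) = P ∧ wins n t w a}
      ((t : ℝ) * pr / ((n - t + 1 : ℕ) : ℝ)) := by
  set d : ℕ := n - t + 1 with hd
  have hdpos : (0 : ℝ) < (d : ℕ) := by positivity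
  set c : ℝ := pr / ((d : ℕ) : ℝ) with hc
  have hc0 : 0 ≤ c := by positivity
  have hwle : ∀ j, w j ≤ c := by
    intro j
    rw [hw j]
    split <;> simp [hc0]
  have hgoal : (t : ℝ) * pr / ((d : ℕ) : ℝ) = (t : ℝ) * c := by
    rw [hc, mul_div_assoc]
  constructor
  · -- membership
    refine ⟨fun i => if (i : ℕ) < t then c else 0, fun i => by dsimp; split <;> simp [hc0], ?_, ?_⟩
    · rw [hgoal]
      simp only [Finset.sum_ite, Finset.sum_const_zero, add_zero, Finset.sum_const,
        nsmul_eq_mul, card_filter_val_lt Ma t hMa]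
    · refine ⟨Finset.univ.filter (fun i : Fin Ma => (i : ℕ) < t),
        card_filter_val_lt Ma t hMa, ?_⟩
      intro i hi
      simp only [Finset.mem_filter] at hi
      have : (Finset.univ.filter
          (fun j : Fin Mr => (if (i : ℕ) < t then c else 0) < w j)) = ∅ := by
        apply Finset.filter_false_of_mem
        intro j _
        rw [if_pos hi.2]
        exact not_lt.mpr (hwle j)
      rw [this]
      simp
  · -- lower bound
    rintro P ⟨a, ha0, haP, S, hScard, hS⟩
    have hkey : ∀ i ∈ S, c ≤ a i := by
      intro i hi
      by_contra hlt
      push_neg at hlt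
      have hsub : (Finset.univ.filter (fun j : Fin Mr => (j : ℕ) < d)) ⊆
          (Finset.univ.filter (fun j => a i < w j)) := by
        intro j hj
        simp only [Finset.mem_filter] at hj ⊢
        refine ⟨Finset.mem_univ _, ?_⟩
        rw [hw j, if_pos hj.2]
        exact hlt
      have := Finset.card_le_card hsub
      rw [card_filter_val_lt Mr d hMr] at this
      have h2 := hS i hi
      omega
    have h1 : (t : ℝ) * c ≤ ∑ i ∈ S, a i := by
      calc (t : ℝ) * c = ∑ _i ∈ S, c := by
            rw [Finset.sum_const, hScard, nsmul_eq_mul]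
        _ ≤ ∑ i ∈ S, a i := Finset.sum_le_sum hkey
    have h2 : ∑ i ∈ S, a i ≤ ∑ i, a i :=
      Finset.sum_le_sum_of_subset_of_nonneg (Finset.subset_univ S)
        (fun i _ _ => ha0 i)
    rw [hgoal]
    rw [← haP]
    exact h1.trans h2
end

section
/- Under approval voting where an attacker can cast each unit of power toward up to v distinct candidates but only needs t seats, the effective amplification of the attacker's power p_a is exactly min(v, t): distributing among more than t candidates wastes power, and with k ≤ min(v,t) votes per unit the attacker can give each of min(v,t) candidates score p_a but cannot give t candidates each a score exceeding p_a when v < t without extra power. Formally: the maximum real s such that the attacker with total power p_a can simultaneously give t distinct candidates score ≥ s each satisfies s = (min(v,t)/t)·p_a. -/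
/-!
Counting every vote once per candidate it reaches, the total score handed out is at most
`min v t · p_a`: an account of power `q` contributes `q` to at most `v` candidates, and there are
only `t` candidates to vote for. Hence `t` candidates cannot all reach more than
`min v t / t · p_a`. Conversely, with `k = min v t`, split `p_a` into `t` accounts of power
`p_a / t` indexed by the cyclic group `Fin t` and let account `i` vote for the translate `i + S`
of a fixed `k`-set `S`; each candidate is then covered by exactly `k` translates.
-/

open Finset Pointwise

section Scores

variable {ι C : Type*} [Fintype ι] [Fintype C] [DecidableEq C]

theorem sum_score_eq_sum_card_nsmul {M : Type*} [AddCommMonoid M] (q : ι → M)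
    (votes : ι → Finset C) :
    ∑ c, ∑ i with c ∈ votes i, q i = ∑ i, #(votes i) • q i := by
  simp_rw [sum_filter]
  rw [sum_comm]
  simp_rw [sum_ite_mem, univ_inter, sum_const]

theorem card_mul_le_mul_sum_of_le_score {R : Type*} [Semiring R] [PartialOrder R]
    [IsOrderedRing R] {q : ι → R} {votes : ι → Finset C} {k : ℕ} {s : R}
    (hq : ∀ i, 0 ≤ q i) (hk : ∀ i, #(votes i) ≤ k)
    (hs : ∀ c, s ≤ ∑ i with c ∈ votes i, q i) :
    Fintype.card C * s ≤ k * ∑ i, q i := by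
  calc (Fintype.card C : R) * s = ∑ _c : C, s := by simp
    _ ≤ ∑ c, ∑ i with c ∈ votes i, q i := sum_le_sum fun c _ => hs c
    _ = ∑ i, #(votes i) • q i := sum_score_eq_sum_card_nsmul q votes
    _ ≤ ∑ i, k • q i := sum_le_sum fun i _ => nsmul_le_nsmul_left (hq i) (hk i)
    _ = k * ∑ i, q i := by simp [mul_sum]

end Scores

theorem card_filter_mem_vadd_finset {G : Type*} [AddGroup G] [Fintype G] [DecidableEq G]
    (S : Finset G) (c : G) : #{i : G | c ∈ i +ᵥ S} = #S := by
  have : ({i : G | c ∈ i +ᵥ S} : Finset G) = S.map (Equiv.subLeft c).toEmbedding := by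
    ext i
    simp only [mem_filter, mem_univ, true_and, mem_vadd_finset, vadd_eq_add, mem_map,
      Equiv.coe_toEmbedding, Equiv.subLeft_apply]
    exact exists_congr fun d => and_congr_right fun _ => by rw [sub_eq_iff_eq_add, eq_comm]
  rw [this, card_map]

theorem stmt11_general (t v : ℕ) (ht : 1 ≤ t) (pa : ℝ) (hpa : 0 ≤ pa) :
    IsGreatest {s : ℝ | ∃ (A : ℕ) (q : Fin A → ℝ) (votes : Fin A → Finset (Fin t)),
        (∀ i, 0 ≤ q i) ∧ (∑ i, q i) = pa ∧ (∀ i, (votes i).card ≤ v) ∧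
        ∀ c : Fin t,
          s ≤ ∑ i ∈ Finset.univ.filter (fun i => c ∈ votes i), q i}
      (((min v t : ℕ) : ℝ) / (t : ℝ) * pa) := by
  have : NeZero t := ⟨by omega⟩
  have ht0 : (0 : ℝ) < t := by exact_mod_cast ht
  constructor
  · obtain ⟨S, -, hS⟩ := exists_subset_card_eq (s := (univ : Finset (Fin t)))
      (n := min v t) (by simp)
    refine ⟨t, fun _ => pa / t, fun i => i +ᵥ S, fun _ => by positivity, ?_, ?_, fun c => ?_⟩
    · simp [field]
    · simp [card_vadd_finset, hS]
    · rw [sum_const, card_filter_mem_vadd_finset, hS, nsmul_eq_mul, mul_div_assoc']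
      exact (div_mul_eq_mul_div _ _ _).le
  · rintro s ⟨A, q, votes, hq, rfl, hv, hs⟩
    have hk : ∀ i, #(votes i) ≤ min v t := fun i =>
      le_min (hv i) (by simpa using card_le_univ (votes i))
    have hbound := card_mul_le_mul_sum_of_le_score hq hk hs
    rw [Fintype.card_fin] at hbound
    rw [div_mul_eq_mul_div, le_div_iff₀ ht0]
    linarith

/-- Under approval voting with at most `v` votes per account, the largest `s`
such that an attacker with total power `p_a` can give each of `t` candidates
score at least `s` is `(min(v,t)/t)·p_a`. -/
theorem stmt11 (t v : ℕ) (ht : 1 ≤ t) (hv : 1 ≤ v) (pa : ℝ) (hpa : 0 ≤ pa) :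
    IsGreatest {s : ℝ | ∃ (A : ℕ) (q : Fin A → ℝ) (votes : Fin A → Finset (Fin t)),
        (∀ i, 0 ≤ q i) ∧ (∑ i, q i) = pa ∧ (∀ i, (votes i).card ≤ v) ∧
        ∀ c : Fin t,
          s ≤ ∑ i ∈ Finset.univ.filter (fun i => c ∈ votes i), q i}
      (((min v t : ℕ) : ℝ) / (t : ℝ) * pa) :=
  stmt11_general t v ht pa hpa
end

section
/- Suppose resisters control total power p_r and, under approval voting with max votes v, each resister account may cast its full power to up to v distinct candidates. The maximum achievable value of the (n-t+1)-th largest score among resister candidates is (min(v, n-t+1)/(n-t+1))·p_r, achieved by splitting the power into accounts that together give each of n-t+1 candidates an equal score. -/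
/-!
Each account of power `q` adds at most `v·q` to the total score, so the scores sum to at most
`v·p_r`; as they are nonnegative, the `k`-th largest one (`k = n - t + 1`) is at most `v·p_r / k`,
and it is at most `p_r` because no candidate collects more than all the power. Conversely, `k`
accounts of power `p_r / k`, account `i` voting for the `min v k` cyclic successors `i, i + 1, …` of
`i` in `Fin k`, give each of `k` candidates exactly `min v k · p_r / k`.
-/

/-- The `k`-th largest value of `w` (weights of unchosen candidates count as 0). -/
noncomputable def kthLargest {m : ℕ} (w : Fin m → ℝ) (k : ℕ) : ℝ :=
  ((Finset.univ.val.map w).sort (· ≤ ·)).getD (m - k) 0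

open Finset

namespace List.Pairwise

variable {α : Type*} [LinearOrder α] {l : List α} {i : ℕ}

theorem length_sub_le_countP_getElem_le (h : l.Pairwise (· ≤ ·)) (hi : i < l.length) :
    l.length - i ≤ l.countP (l[i] ≤ ·) := by
  have hd := h.sublist (List.drop_sublist i l)
  rw [List.drop_eq_getElem_cons hi] at hd
  refine le_trans ?_ (List.drop_sublist i l).countP_le
  rw [← List.length_drop, (List.countP_eq_length.mpr fun a ha => ?_)]
  rw [List.drop_eq_getElem_cons hi, List.mem_cons] at ha
  rcases ha with rfl | ha
  · simp
  · simpa using List.rel_of_pairwise_cons hd ha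

theorem countP_getElem_lt_le (h : l.Pairwise (· ≤ ·)) (hi : i < l.length) :
    l.countP (l[i] < ·) ≤ l.length - (i + 1) := by
  have htake : (l.take (i + 1)).countP (l[i] < ·) = 0 := by
    refine List.countP_eq_zero.mpr fun a ha => ?_
    rw [List.take_succ_eq_append_getElem hi, List.mem_append, List.mem_singleton] at ha
    rcases ha with ha | rfl
    · have hi_mem : l[i] ∈ l.drop i := List.drop_eq_getElem_cons hi ▸ List.mem_cons_self
      simpa using h.rel_of_mem_take_of_mem_drop ha hi_mem
    · simp
  have hsplit :=
    List.countP_append (p := (l[i] < ·)) (l₁ := l.take (i + 1)) (l₂ := l.drop (i + 1))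
  rw [List.take_append_drop, htake, zero_add] at hsplit
  exact hsplit ▸ List.countP_le_length.trans (List.length_drop ..).le

end List.Pairwise

section kthLargest

variable {m : ℕ} (w : Fin m → ℝ) {k : ℕ}

theorem card_filter_eq_countP_sort (p : ℝ → Prop) [DecidablePred p] :
    #{c | p (w c)} = ((univ.val.map w).sort (· ≤ ·)).countP (p ·) := by
  rw [← Multiset.coe_countP, Multiset.sort_eq, Multiset.countP_map]
  rfl

theorem kthLargest_eq_getElem (hk0 : 0 < k) (hk : k ≤ m) :
    ∃ h, kthLargest w k = ((univ.val.map w).sort (· ≤ ·))[m - k]'h := by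
  have : m - k < ((univ.val.map w).sort (· ≤ ·)).length := by simp; omega
  exact ⟨this, List.getD_eq_getElem _ _ this⟩

theorem le_card_filter_kthLargest_le (hk : k ≤ m) : k ≤ #{c | kthLargest w k ≤ w c} := by
  rcases Nat.eq_zero_or_pos k with rfl | hk0
  · exact Nat.zero_le _
  obtain ⟨hi, hx⟩ := kthLargest_eq_getElem w hk0 hk
  have := (Multiset.pairwise_sort _ _).length_sub_le_countP_getElem_le hi
  rw [card_filter_eq_countP_sort, hx]
  rw [Multiset.length_sort, Multiset.card_map, card_val, card_univ, Fintype.card_fin] at this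
  omega

theorem card_filter_kthLargest_lt_lt (hk0 : 0 < k) : #{c | kthLargest w k < w c} < k := by
  rcases lt_or_ge m k with hmk | hk
  · exact (card_le_univ _).trans_lt (by simpa using hmk)
  obtain ⟨hi, hx⟩ := kthLargest_eq_getElem w hk0 hk
  have := (Multiset.pairwise_sort _ _).countP_getElem_lt_le hi
  rw [card_filter_eq_countP_sort, hx]
  rw [Multiset.length_sort, Multiset.card_map, card_val, card_univ, Fintype.card_fin] at this
  omega

theorem kthLargest_eq_of_card_filter {s : ℝ} (hle : k ≤ #{c | s ≤ w c})
    (hlt : #{c | s < w c} < k) : kthLargest w k = s := by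
  have hk0 : 0 < k := (Nat.zero_le _).trans_lt hlt
  have hk : k ≤ m := hle.trans (card_le_univ _ |>.trans_eq (Fintype.card_fin m))
  rcases lt_trichotomy (kthLargest w k) s with hx | hx | hx
  · have := card_le_card <|
      monotone_filter_right univ fun c _ (h : s ≤ w c) => hx.trans_le h
    exact absurd (card_filter_kthLargest_lt_lt w hk0) (by omega)
  · exact hx
  · have := card_le_card <|
      monotone_filter_right univ fun c _ (h : kthLargest w k ≤ w c) => hx.trans_le h
    exact absurd (le_card_filter_kthLargest_le w hk) (by omega)

theorem kthLargest_le_of_forall_le {b : ℝ} (hk0 : 0 < k) (hk : k ≤ m) (hb : ∀ c, w c ≤ b) :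
    kthLargest w k ≤ b := by
  obtain ⟨c, hc⟩ := card_pos.mp (hk0.trans_le (le_card_filter_kthLargest_le w hk))
  exact (mem_filter.mp hc).2.trans (hb c)

theorem card_mul_kthLargest_le_sum (hw : ∀ c, 0 ≤ w c) (hk : k ≤ m) :
    k * kthLargest w k ≤ ∑ c, w c := by
  set x := kthLargest w k
  rcases lt_or_ge x 0 with hx | hx
  · exact (mul_nonpos_of_nonneg_of_nonpos k.cast_nonneg hx.le).trans (sum_nonneg fun c _ => hw c)
  calc (k : ℝ) * x ≤ #{c | x ≤ w c} * x := by
        gcongr; exact_mod_cast le_card_filter_kthLargest_le w hk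
    _ = ∑ c ∈ {c | x ≤ w c}, x := by rw [sum_const, nsmul_eq_mul]
    _ ≤ ∑ c ∈ {c | x ≤ w c}, w c := sum_le_sum fun c hc => (mem_filter.mp hc).2
    _ ≤ ∑ c, w c := sum_le_sum_of_subset_of_nonneg (filter_subset _ _) fun c _ _ => hw c

end kthLargest

section score

variable {ι C : Type*} [Fintype ι] [DecidableEq C]

def score (q : ι → ℝ) (votes : ι → Finset C) (c : C) : ℝ :=
  ∑ i ∈ univ.filter (fun i => c ∈ votes i), q i

variable {q : ι → ℝ} {votes : ι → Finset C}

theorem score_le_sum (hq : ∀ i, 0 ≤ q i) (c : C) : score q votes c ≤ ∑ i, q i :=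
  sum_le_sum_of_subset_of_nonneg (filter_subset _ _) fun i _ _ => hq i

theorem sum_score [Fintype C] : ∑ c, score q votes c = ∑ i, #(votes i) * q i := by
  simp only [score, sum_filter]
  rw [sum_comm]
  refine sum_congr rfl fun i _ => ?_
  rw [sum_ite_mem, univ_inter, sum_const, nsmul_eq_mul]

theorem sum_score_le [Fintype C] {v : ℕ} (hq : ∀ i, 0 ≤ q i) (hv : ∀ i, #(votes i) ≤ v) :
    ∑ c, score q votes c ≤ v * ∑ i, q i := by
  rw [sum_score, mul_sum]
  exact sum_le_sum fun i _ => mul_le_mul_of_nonneg_right (by exact_mod_cast hv i) (hq i)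

end score

section map

variable {ι C D : Type*} [Fintype ι] [DecidableEq D] {q : ι → ℝ} {votes : ι → Finset C}
  (e : C ↪ D)

theorem score_map_apply [DecidableEq C] (c : C) :
    score q (fun i => (votes i).map e) (e c) = score q votes c := by
  simp only [score, mem_map' e]

theorem score_map_of_forall_ne {d : D} (hd : ∀ c, e c ≠ d) :
    score q (fun i => (votes i).map e) d = 0 := by
  refine sum_eq_zero fun i hi => absurd (mem_filter.mp hi).2 ?_
  simp only [mem_map, not_exists, not_and]
  exact fun c _ => hd c

end map

section translates

variable {G : Type*} [AddGroup G] [Fintype G] [DecidableEq G] (S : Finset G)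

theorem score_translates (a : ℝ) (g : G) :
    score (fun _ => a) (fun i => S.map (Equiv.addLeft i).toEmbedding) g = #S * a := by
  rw [score, sum_const, nsmul_eq_mul]
  congr 2
  refine card_equiv ((Equiv.neg G).trans (Equiv.addRight g)) fun i => ?_
  simp [mem_map_equiv]

theorem kthLargest_score_translates {m : ℕ} (e : G ↪ Fin m) {a : ℝ} (ha : 0 ≤ a) :
    kthLargest (score (fun _ => a) fun i => (S.map (Equiv.addLeft i).toEmbedding).map e)
      (Fintype.card G) = #S * a := by
  set w := score (fun _ => a) fun i => (S.map (Equiv.addLeft i).toEmbedding).map e with hw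
  have hw_range (g : G) : w (e g) = #S * a := by
    rw [hw, score_map_apply, score_translates]
  have hw_le (c : Fin m) : w c ≤ #S * a := by
    by_cases hc : ∃ g, e g = c
    · obtain ⟨g, rfl⟩ := hc
      exact (hw_range g).le
    · rw [hw, score_map_of_forall_ne e (not_exists.mp hc)]
      positivity
  apply kthLargest_eq_of_card_filter
  · rw [← card_univ, ← card_map e]
    refine card_le_card fun c hc => ?_
    obtain ⟨g, -, rfl⟩ := mem_map.mp hc
    simp [hw_range]
  · rw [filter_false_of_mem fun c _ => (hw_le c).not_gt, card_empty]
    exact Fintype.card_pos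

end translates

theorem le_min_div_mul {x b : ℝ} {v k : ℕ} (hk : 0 < k) (hkx : k * x ≤ v * b) (hx : x ≤ b) :
    x ≤ (min v k : ℕ) / k * b := by
  have hkR : (0 : ℝ) < k := by exact_mod_cast hk
  rcases le_total v k with hvk | hkv
  · rw [min_eq_left hvk, div_mul_eq_mul_div, le_div_iff₀ hkR]
    linarith
  · rwa [min_eq_right hkv, div_self hkR.ne', one_mul]

theorem stmt12_general (n t v : ℕ)
    (pr : ℝ) (hpr : 0 ≤ pr) (Mr : ℕ) (hMr : n - t + 1 ≤ Mr) :
    IsGreatest {x : ℝ | ∃ (A : ℕ) (q : Fin A → ℝ) (votes : Fin A → Finset (Fin Mr)),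
        (∀ i, 0 ≤ q i) ∧ (∑ i, q i) = pr ∧ (∀ i, (votes i).card ≤ v) ∧
        x = kthLargest
          (fun c => ∑ i ∈ Finset.univ.filter (fun i => c ∈ votes i), q i)
          (n - t + 1)}
      (((min v (n - t + 1) : ℕ) : ℝ) / ((n - t + 1 : ℕ) : ℝ) * pr) := by
  set k := n - t + 1
  have hk : 0 < k := Nat.succ_pos _
  have : NeZero k := ⟨hk.ne'⟩
  constructor
  · have hmk : min v k ≤ k := min_le_right v k
    set S : Finset (Fin k) := univ.map (Fin.castLEEmb hmk)
    refine ⟨k, fun _ => pr / k,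
      fun i => (S.map (Equiv.addLeft i).toEmbedding).map (Fin.castLEEmb hMr),
      fun _ => by positivity, ?_, fun i => by simp [S], ?_⟩
    · rw [sum_const, card_univ, Fintype.card_fin, nsmul_eq_mul]
      field_simp
    · have := kthLargest_score_translates S (Fin.castLEEmb hMr) (a := pr / k) (by positivity)
      rw [Fintype.card_fin, card_map, card_univ, Fintype.card_fin] at this
      refine Eq.trans ?_ this.symm
      ring
  · rintro x ⟨A, q, votes, hq, rfl, hv, rfl⟩
    refine le_min_div_mul hk ?_ (kthLargest_le_of_forall_le _ hk hMr (score_le_sum hq))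
    exact (card_mul_kthLargest_le_sum _ (fun c => sum_nonneg fun i _ => hq i) hMr).trans
      (sum_score_le hq hv)

/-- Under approval voting with at most `v` votes per account, the maximum
achievable `(n-t+1)`-th largest score among resister candidates, with total
resister power `p_r`, is `(min(v, n-t+1)/(n-t+1))·p_r`. -/
theorem stmt12 (n t v : ℕ) (ht : 1 ≤ t) (htn : t ≤ n) (hv : 1 ≤ v)
    (pr : ℝ) (hpr : 0 ≤ pr) (Mr : ℕ) (hMr : n - t + 1 ≤ Mr) :
    IsGreatest {x : ℝ | ∃ (A : ℕ) (q : Fin A → ℝ) (votes : Fin A → Finset (Fin Mr)),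
        (∀ i, 0 ≤ q i) ∧ (∑ i, q i) = pr ∧ (∀ i, (votes i).card ≤ v) ∧
        x = kthLargest
          (fun c => ∑ i ∈ Finset.univ.filter (fun i => c ∈ votes i), q i)
          (n - t + 1)}
      (((min v (n - t + 1) : ℕ) : ℝ) / ((n - t + 1 : ℕ) : ℝ) * pr) :=
  stmt12_general n t v pr hpr Mr hMr
end

section
/- Let n, t be positive integers with t ≤ n, and consider the community-to-community setting in which the attacker uses z_a = ⌈t/v⌉ pools each of power p_a/z_a (each pool voting for v distinct attacker candidates, every attacker candidate covered at least once), and resisters symmetrically use z_r = ⌈(n-t+1)/v⌉ pools of power p_r/z_r. Then the attacker defeats the resisters' minimum-score defended candidate iff p_a/⌈t/v⌉ ≥ p_r/⌈(n-t+1)/v⌉, i.e., the active resistance equals R_A = (⌈t/v⌉/⌈(n-t+1)/v⌉)·p_r, and this quantity is at most ⌈t/(n-t+1)⌉·p_r. -/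
theorem stmt13 (n t v : ℕ) (ht : 1 ≤ t) (htn : t ≤ n) (hv : 1 ≤ v)
    (pa pr : ℝ) (hpa : 0 ≤ pa) (hpr : 0 ≤ pr) :
    (pa / ((⌈(t : ℚ) / (v : ℚ)⌉ : ℤ) : ℝ)
        ≥ pr / ((⌈((n - t + 1 : ℕ) : ℚ) / (v : ℚ)⌉ : ℤ) : ℝ) ↔
      pa ≥ ((⌈(t : ℚ) / (v : ℚ)⌉ : ℤ) : ℝ) /
          ((⌈((n - t + 1 : ℕ) : ℚ) / (v : ℚ)⌉ : ℤ) : ℝ) * pr) ∧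
    ((⌈(t : ℚ) / (v : ℚ)⌉ : ℤ) : ℝ) /
        ((⌈((n - t + 1 : ℕ) : ℚ) / (v : ℚ)⌉ : ℤ) : ℝ) * pr
      ≤ ((⌈(t : ℚ) / ((n - t + 1 : ℕ) : ℚ)⌉ : ℤ) : ℝ) * pr := by
  set m : ℕ := n - t + 1 with hm
  have hm1 : 1 ≤ m := Nat.le_add_left 1 _
  have hvQ : (0 : ℚ) < (v : ℚ) := by exact_mod_cast hv
  have hmQ : (0 : ℚ) < (m : ℚ) := by exact_mod_cast hm1
  have htQ : (0 : ℚ) < (t : ℚ) := by exact_mod_cast ht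
  set A : ℤ := ⌈(t : ℚ) / (v : ℚ)⌉ with hA
  set B : ℤ := ⌈(m : ℚ) / (v : ℚ)⌉ with hB
  set C : ℤ := ⌈(t : ℚ) / (m : ℚ)⌉ with hC
  have hApos : 0 < A := Int.ceil_pos.mpr (div_pos htQ hvQ)
  have hBpos : 0 < B := Int.ceil_pos.mpr (div_pos hmQ hvQ)
  have hCpos : 0 < C := Int.ceil_pos.mpr (div_pos htQ hmQ)
  -- key: A ≤ C * B
  have hkey : A ≤ C * B := by
    have h1 : (t : ℚ) ≤ (C : ℚ) * (m : ℚ) := by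
      have := Int.le_ceil ((t : ℚ) / (m : ℚ))
      calc (t : ℚ) = (t : ℚ) / (m : ℚ) * m := by field_simp
        _ ≤ (C : ℚ) * m := by
            exact mul_le_mul_of_nonneg_right this hmQ.le
    have h2 : A ≤ ⌈(C : ℚ) * (m : ℚ) / (v : ℚ)⌉ :=
      Int.ceil_le_ceil (by gcongr)
    refine h2.trans (Int.ceil_le.mpr ?_)
    rw [Int.cast_mul]
    calc (C : ℚ) * m / v = (C : ℚ) * (m / v) := by ring
      _ ≤ (C : ℚ) * B := by
          exact mul_le_mul_of_nonneg_left (Int.le_ceil _)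
            (by exact_mod_cast hCpos.le)
  have hAR : (0 : ℝ) < (A : ℝ) := by exact_mod_cast hApos
  have hBR : (0 : ℝ) < (B : ℝ) := by exact_mod_cast hBpos
  constructor
  · rw [ge_iff_le, ge_iff_le, div_le_div_iff₀ hBR hAR, div_mul_eq_mul_div,
      div_le_iff₀ hBR]
    constructor <;> intro h <;> nlinarith
  · have hAB : (A : ℝ) / (B : ℝ) ≤ (C : ℝ) := by
      rw [div_le_iff₀ hBR]
      have : (A : ℝ) ≤ (C : ℝ) * (B : ℝ) := by exact_mod_cast hkey
      linarith
    exact mul_le_mul_of_nonneg_right hAB hpr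
end
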